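/- For a positive n×n matrix C and a positive vector x, the maximum over all i, j of c_{ij} * x_j / x_i equals 1 plus the maximum over all i, j of the relative error |c_{ij} - x_i/x_j| / c_{ij}, provided C is symmetrically reciprocal (c_{ij} = 1/c_{ji}). -/

import Mathlib

/-- Maximum of a function over `Fin n` (nonempty since `0 < n`). -/
noncomputable def vmax {n : ℕ} (hn : 0 < n) (f : Fin n → ℝ) : ℝ :=
  Finset.univ.sup' (Finset.univ_nonempty_iff.mpr ⟨⟨0, hn⟩⟩) f

/-- Minimum of a function over `Fin n`. -/
noncomputable def vmin {n : ℕ} (hn : 0 < n) (f : Fin n → ℝ) : ℝ :=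
  Finset.univ.inf' (Finset.univ_nonempty_iff.mpr ⟨⟨0, hn⟩⟩) f

/-- Max-times matrix product. -/
noncomputable def mtProd {n : ℕ} (hn : 0 < n) (X Y : Matrix (Fin n) (Fin n) ℝ) :
    Matrix (Fin n) (Fin n) ℝ :=
  fun i j => vmax hn (fun k => X i k * Y k j)

/-- Max-times matrix powers, `B^0 = I`. -/
noncomputable def mtPow {n : ℕ} (hn : 0 < n) (B : Matrix (Fin n) (Fin n) ℝ) :
    ℕ → Matrix (Fin n) (Fin n) ℝ
  | 0 => fun i j => if i = j then (1 : ℝ) else 0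
  | (k + 1) => mtProd hn B (mtPow hn B k)

/-- Kleene star: entrywise maximum of `B^0, ..., B^(n-1)`. -/
noncomputable def kstar {n : ℕ} (hn : 0 < n) (B : Matrix (Fin n) (Fin n) ℝ) :
    Matrix (Fin n) (Fin n) ℝ :=
  fun i j => vmax hn (fun k : Fin n => mtPow hn B k.1 i j)

/-- Max-times matrix-vector product. -/
noncomputable def mtVec {n : ℕ} (hn : 0 < n) (X : Matrix (Fin n) (Fin n) ℝ)
    (x : Fin n → ℝ) : Fin n → ℝ :=
  fun i => vmax hn (fun j => X i j * x j)


/-! With `g i j = c_{ij} x_j / x_i`, reciprocity makes `g` itself reciprocal and turns the relative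
error at `(i, j)` into `|1 - g j i|`. For a positive reciprocal pair `a b = 1` both bounded by
`M = max g`, AM-GM gives `|1 - a| ≤ M - 1`, and equality is attained where `g` attains `M`. -/

section vmax

variable {n : ℕ} (hn : 0 < n)

theorem le_vmax (f : Fin n → ℝ) (i : Fin n) : f i ≤ vmax hn f :=
  Finset.le_sup' f (Finset.mem_univ i)

theorem vmax_le_iff {f : Fin n → ℝ} {a : ℝ} : vmax hn f ≤ a ↔ ∀ i, f i ≤ a := by
  simp [vmax]

theorem exists_vmax_eq (f : Fin n → ℝ) : ∃ i, vmax hn f = f i := by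
  obtain ⟨i, -, hi⟩ :=
    Finset.exists_mem_eq_sup' (Finset.univ_nonempty_iff.mpr ⟨⟨0, hn⟩⟩) f
  exact ⟨i, hi⟩

theorem vmax_comm (f : Fin n → Fin n → ℝ) :
    vmax hn (fun i => vmax hn (f i)) = vmax hn (fun j => vmax hn (fun i => f i j)) :=
  Finset.sup'_comm _ _ f

end vmax

theorem abs_one_sub_le_of_mul_eq_one {a b M : ℝ} (ha : 0 < a) (hab : a * b = 1)
    (haM : a ≤ M) (hbM : b ≤ M) : |1 - a| ≤ M - 1 := by
  have hb : 0 < b := pos_of_mul_pos_right (hab ▸ one_pos) ha.le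
  have amgm : 2 ≤ a + b := by nlinarith [sq_nonneg (a - b)]
  rw [abs_le]
  constructor <;> linarith

theorem one_le_of_mul_eq_one_of_le {a b : ℝ} (ha : 0 < a) (hab : a * b = 1) (hba : b ≤ a) :
    1 ≤ a := by
  nlinarith

theorem vmax_vmax_abs_one_sub_eq {n : ℕ} (hn : 0 < n) {g : Fin n → Fin n → ℝ}
    (hpos : ∀ i j, 0 < g i j) (hrec : ∀ i j, g i j * g j i = 1) :
    vmax hn (fun i => vmax hn (fun j => |1 - g i j|)) =
      vmax hn (fun i => vmax hn (g i)) - 1 := by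
  set M := vmax hn (fun i => vmax hn (g i))
  have hle : ∀ i j, g i j ≤ M := fun i j =>
    (le_vmax hn (g i) j).trans (le_vmax hn (fun i => vmax hn (g i)) i)
  apply le_antisymm
  · simp only [vmax_le_iff]
    exact fun i j => abs_one_sub_le_of_mul_eq_one (hpos i j) (hrec i j) (hle i j) (hle j i)
  · obtain ⟨i, hi⟩ := exists_vmax_eq hn (fun i => vmax hn (g i))
    obtain ⟨j, hj⟩ := exists_vmax_eq hn (g i)
    have hM : M = g i j := hi.trans hj
    have h1M : 1 ≤ M := hM ▸ one_le_of_mul_eq_one_of_le (hpos i j) (hrec i j) (hM ▸ hle j i)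
    calc M - 1 = |1 - g i j| := by rw [← hM, abs_of_nonpos (by linarith)]; ring
      _ ≤ vmax hn (fun j => |1 - g i j|) := le_vmax hn (fun j => |1 - g i j|) j
      _ ≤ _ := le_vmax hn (fun i => vmax hn (fun j => |1 - g i j|)) i

theorem maxRatio_eq_one_add_relative_error {n : ℕ} (hn : 0 < n)
    (C : Matrix (Fin n) (Fin n) ℝ) (x : Fin n → ℝ)
    (hC : ∀ i j, 0 < C i j)
    (hrec : ∀ i j, C i j * C j i = 1)
    (hx : ∀ i, 0 < x i) :
    vmax hn (fun i => vmax hn (fun j => C i j * x j / x i)) =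
      1 + vmax hn (fun i => vmax hn (fun j => |C i j - x i / x j| / C i j)) := by
  set g : Fin n → Fin n → ℝ := fun i j => C i j * x j / x i
  have hg_pos : ∀ i j, 0 < g i j := fun i j => by
    have := hC i j; have := hx i; have := hx j
    positivity
  have hg_rec : ∀ i j, g i j * g j i = 1 := fun i j => by
    have := (hx i).ne'; have := (hx j).ne'
    simp only [g]; field_simp; linear_combination hrec i j
  have hg_err : ∀ i j, |C i j - x i / x j| / C i j = |1 - g j i| := fun i j => by
    have hCij := hC i j; have := (hx j).ne'
    have hCji : C j i = 1 / C i j := by field_simp; linear_combination hrec i j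
    rw [show C i j - x i / x j = C i j * (1 - g j i) by simp only [g, hCji]; field_simp,
      abs_mul, abs_of_pos hCij, mul_div_cancel_left₀ _ hCij.ne']
  simp_rw [hg_err]
  rw [vmax_comm hn (fun i j => |1 - g j i|), vmax_vmax_abs_one_sub_eq hn hg_pos hg_rec]
  ring
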